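/- Let L > 0, ε > 0, λ = 608ε/L, let d ≥ 1 be an integer, and define f : ℝ^d → ℝ by f(x) = (Lλ²/152) H_d(x/λ). Then for every x ∈ ℝ^d with prog_0(x) < d one has ‖∇f(x)‖ ≥ 4ε; equivalently, ‖∇f(x)‖ ≥ 4ε · 𝟙[prog_0(x) < d] for all x ∈ ℝ^d. -/

import Mathlib

/-- `Ψ(t) = 0` for `t ≤ 1/2` and `Ψ(t) = exp(1 − 1/(2t−1)²)` for `t > 1/2`. -/
noncomputable def Psi (t : ℝ) : ℝ :=
  if t ≤ 1 / 2 then 0 else Real.exp (1 - 1 / (2 * t - 1) ^ 2)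

/-- `Φ(t) = √e ∫_{−∞}^{t} exp(−τ²/2) dτ`. -/
noncomputable def Phi (t : ℝ) : ℝ :=
  Real.sqrt (Real.exp 1) * ∫ τ in Set.Iic t, Real.exp (-τ ^ 2 / 2)

/-- The `i`-th coordinate (1-based, `1 ≤ i ≤ d`) of a vector in `ℝ^d`;
zero when out of range. -/
noncomputable def coord (d : ℕ) (y : EuclideanSpace ℝ (Fin d)) (i : ℕ) : ℝ :=
  if h : i - 1 < d then y ⟨i - 1, h⟩ else 0

/-- The chain function
`H_d(x) = −Ψ(1)Φ(x₁) + ∑_{i=2}^d (Ψ(−x_{i−1})Φ(−x_i) − Ψ(x_{i−1})Φ(x_i))`. -/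
noncomputable def Hchain (d : ℕ) (y : EuclideanSpace ℝ (Fin d)) : ℝ :=
  -Psi 1 * Phi (coord d y 1) +
    ∑ i ∈ Finset.Icc 2 d,
      (Psi (-coord d y (i - 1)) * Phi (-coord d y i) -
        Psi (coord d y (i - 1)) * Phi (coord d y i))

open Classical in
/-- The progress index `prog_a(x) = max({i ∈ {1,…,d} : |x_i| > a} ∪ {0})`. -/
noncomputable def prog (d : ℕ) (a : ℝ) (y : EuclideanSpace ℝ (Fin d)) : ℕ :=
  ((Finset.Icc 1 d).filter fun i => a < |coord d y i|).sup id

/-!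
Write `H_d` as a sum of links `Ψ(−a)Φ(−b) − Ψ(a)Φ(b)` between consecutive coordinates, the first
one starting at the constant `x₀ = 1` (as `Ψ(−1) = 0`). Since `Ψ, Ψ', Φ, Φ' ≥ 0`, increasing any
coordinate decreases every link. Take `j = prog_1(x) + 1 ≤ prog_0(x) + 1 ≤ d`: then `|x_{j−1}| > 1`
(or `x_{j−1} = x₀ = 1`), so `Ψ(−x_{j−1}) + Ψ(x_{j−1}) ≥ 1`, and `|x_j| ≤ 1`, so `Φ'(x_j) ≥ 1`; hence
`∂_j H_d(x) ≤ −1`. Finally `‖∇f(x)‖ = (Lλ/152)‖∇H_d(x/λ)‖` and `Lλ/152 = 4ε`.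
-/

open Real Set Filter Topology Asymptotics MeasureTheory

lemma hasDerivAt_zero_of_abs_le_sq {f : ℝ → ℝ} {a C : ℝ} (hfa : f a = 0)
    (hf : ∀ s, |f s| ≤ C * (s - a) ^ 2) : HasDerivAt f 0 a := by
  rw [hasDerivAt_iff_isLittleO]
  simp only [hfa, sub_zero, smul_zero]
  refine IsBigO.trans_isLittleO (g := fun s => ‖s - a‖ ^ 2) ?_ (isLittleO_pow_sub_sub a one_lt_two)
  refine IsBigO.of_bound C (Eventually.of_forall fun s => ?_)
  simpa [sq_abs] using hf s

lemma hasDerivAt_integral_Iic {g : ℝ → ℝ} (hg : Integrable g) (hgc : Continuous g) (t : ℝ) :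
    HasDerivAt (fun s => ∫ τ in Iic s, g τ) (g t) t := by
  have hsplit : ∀ s, ∫ τ in Iic s, g τ = (∫ τ in Iic 0, g τ) + ∫ τ in (0 : ℝ)..s, g τ :=
    fun s => by
      rw [← intervalIntegral.integral_Iic_sub_Iic hg.integrableOn hg.integrableOn]
      ring
  rw [funext hsplit]
  exact (hgc.integral_hasStrictDerivAt 0 t).hasDerivAt.const_add _

lemma HasLineDerivAt.abs_le_norm_fderiv_mul {E : Type*} [NormedAddCommGroup E] [NormedSpace ℝ E]
    {f : E → ℝ} {x v : E} {D : ℝ} (h : HasLineDerivAt ℝ f D x v) (hf : DifferentiableAt ℝ f x) :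
    |D| ≤ ‖fderiv ℝ f x‖ * ‖v‖ := by
  rw [h.unique (hf.hasFDerivAt.hasLineDerivAt v)]
  exact (fderiv ℝ f x).le_opNorm v

lemma norm_gradient_eq_norm_fderiv {F : Type*} [NormedAddCommGroup F] [InnerProductSpace ℝ F]
    [CompleteSpace F] (f : F → ℝ) (x : F) : ‖gradient f x‖ = ‖fderiv ℝ f x‖ :=
  (InnerProductSpace.toDual ℝ F).symm.norm_map _

lemma norm_fderiv_const_mul_comp_smul {E : Type*} [NormedAddCommGroup E] [NormedSpace ℝ E]
    {g : E → ℝ} {x : E} (c r : ℝ) (hg : DifferentiableAt ℝ g (r • x)) :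
    ‖fderiv ℝ (fun x => c * g (r • x)) x‖ = |c| * |r| * ‖fderiv ℝ g (r • x)‖ := by
  have hgr : DifferentiableAt ℝ (fun x => g (r • x)) x :=
    hg.comp x (differentiableAt_id.const_smul r)
  rw [fderiv_const_mul hgr c,
    fderiv_comp_smul (f := g) r, norm_smul, norm_smul, Real.norm_eq_abs, Real.norm_eq_abs, mul_assoc]

-- Also correct for `t ≤ 1/2`, where `Ψ = 0` (at `t = 1/2` through Lean's `x / 0 = 0`).
noncomputable def Psi' (t : ℝ) : ℝ := 4 * Psi t / (2 * t - 1) ^ 3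

noncomputable def Phi' (t : ℝ) : ℝ := √(exp 1) * exp (-t ^ 2 / 2)

lemma Psi_of_le {t : ℝ} (ht : t ≤ 1 / 2) : Psi t = 0 := if_pos ht

lemma Psi_of_gt {t : ℝ} (ht : 1 / 2 < t) : Psi t = exp (1 - 1 / (2 * t - 1) ^ 2) :=
  if_neg ht.not_ge

lemma Psi_nonneg (t : ℝ) : 0 ≤ Psi t := by
  unfold Psi; split <;> positivity

lemma Psi'_nonneg (t : ℝ) : 0 ≤ Psi' t := by
  rcases le_or_gt t (1 / 2) with ht | ht
  · simp [Psi', Psi_of_le ht]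
  · have : 0 < 2 * t - 1 := by linarith
    unfold Psi'; have := Psi_nonneg t; positivity

lemma one_le_Psi {t : ℝ} (ht : 1 ≤ t) : 1 ≤ Psi t := by
  rw [Psi_of_gt (by linarith), one_le_exp_iff, sub_nonneg,
    div_le_one (by nlinarith)]
  nlinarith

lemma one_le_Psi_neg_add_Psi {a : ℝ} (ha : 1 ≤ |a|) : 1 ≤ Psi (-a) + Psi a := by
  rcases le_abs'.mp ha with h | h
  · linarith [one_le_Psi (le_neg_of_le_neg h), Psi_nonneg a]
  · linarith [one_le_Psi h, Psi_nonneg (-a)]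

lemma Psi_le_exp_one_mul_sq (t : ℝ) : Psi t ≤ exp 1 * (2 * t - 1) ^ 2 := by
  rcases le_or_gt t (1 / 2) with ht | ht
  · rw [Psi_of_le ht]; positivity
  · set u := (2 * t - 1) ^ 2
    have hu : 0 < u := pow_pos (by linarith) 2
    -- `1/u ≤ exp (1/u)` rearranges to `exp (-1/u) ≤ u`
    have h : 1 / u ≤ exp (1 / u) := by linarith [add_one_le_exp (1 / u)]
    rw [Psi_of_gt ht, sub_eq_add_neg, exp_add]
    gcongr
    rw [exp_neg, inv_le_iff_one_le_mul₀ (exp_pos _)]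
    calc 1 = u * (1 / u) := by field_simp
      _ ≤ u * exp (1 / u) := by gcongr

lemma hasDerivAt_Psi (t : ℝ) : HasDerivAt Psi (Psi' t) t := by
  rcases lt_trichotomy t (1 / 2) with ht | rfl | ht
  · have : Psi =ᶠ[𝓝 t] fun _ => 0 :=
      (eventually_lt_nhds ht).mono fun s hs => Psi_of_le hs.le
    rw [show Psi' t = 0 by simp [Psi', Psi_of_le ht.le]]
    exact (hasDerivAt_const t 0).congr_of_eventuallyEq this
  · rw [show Psi' (1 / 2) = 0 by simp [Psi', Psi_of_le]]
    refine hasDerivAt_zero_of_abs_le_sq (C := 4 * exp 1) (Psi_of_le le_rfl) fun s => ?_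
    rw [abs_of_nonneg (Psi_nonneg s)]
    linarith [Psi_le_exp_one_mul_sq s]
  · have hpos : 0 < 2 * t - 1 := by linarith
    have : (fun s => exp (1 - 1 / (2 * s - 1) ^ 2)) =ᶠ[𝓝 t] Psi :=
      (eventually_gt_nhds ht).mono fun s hs => (Psi_of_gt hs).symm
    refine HasDerivAt.congr_of_eventuallyEq ?_ this.symm
    have := ((((hasDerivAt_id' t).const_mul 2).sub_const 1).fun_pow 2).fun_inv (by positivity)
    refine ((this.const_sub 1).exp.congr_deriv ?_).congr_of_eventuallyEq
      (Eventually.of_forall fun s => by simp only [one_div])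
    unfold Psi'
    rw [Psi_of_gt ht]
    field_simp
    ring

lemma integrable_exp_neg_sq_div_two : Integrable fun τ : ℝ => exp (-τ ^ 2 / 2) := by
  simpa [neg_div, div_eq_inv_mul] using integrable_exp_neg_mul_sq (by norm_num : (0 : ℝ) < 1 / 2)

lemma hasDerivAt_Phi (t : ℝ) : HasDerivAt Phi (Phi' t) t :=
  (hasDerivAt_integral_Iic integrable_exp_neg_sq_div_two (by fun_prop) t).const_mul _

lemma Phi_nonneg (t : ℝ) : 0 ≤ Phi t :=
  mul_nonneg (sqrt_nonneg _) (integral_nonneg fun _ => (exp_pos _).le)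

lemma Phi'_nonneg (t : ℝ) : 0 ≤ Phi' t := by
  unfold Phi'; positivity

lemma Phi'_neg (t : ℝ) : Phi' (-t) = Phi' t := by
  simp [Phi']

lemma one_le_Phi' {t : ℝ} (ht : |t| ≤ 1) : 1 ≤ Phi' t := by
  have hsq : t ^ 2 ≤ 1 := by rw [← sq_abs]; nlinarith [abs_nonneg t]
  rw [Phi', sqrt_eq_rpow, ← exp_mul, ← exp_add, one_le_exp_iff]
  linarith

noncomputable def link (a b : ℝ) : ℝ := Psi (-a) * Phi (-b) - Psi a * Phi b

noncomputable def linkDeriv (a b p q : ℝ) : ℝ :=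
  -((Psi' (-a) * Phi (-b) + Psi' a * Phi b) * p) - (Psi (-a) + Psi a) * Phi' b * q

lemma HasDerivAt.link {u v : ℝ → ℝ} {p q s : ℝ} (hu : HasDerivAt u p s) (hv : HasDerivAt v q s) :
    HasDerivAt (fun s => link (u s) (v s)) (linkDeriv (u s) (v s) p q) s := by
  have h := (((hasDerivAt_Psi _).comp s hu.neg).fun_mul ((hasDerivAt_Phi _).comp s hv.neg)).fun_sub
    (((hasDerivAt_Psi _).comp s hu).fun_mul ((hasDerivAt_Phi _).comp s hv))
  refine h.congr_deriv ?_
  simp only [Function.comp, Pi.neg_apply, linkDeriv, Phi'_neg]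
  ring

lemma linkDeriv_le {a b p : ℝ} (q : ℝ) (hp : 0 ≤ p) :
    linkDeriv a b p q ≤ -((Psi (-a) + Psi a) * Phi' b * q) := by
  have : 0 ≤ (Psi' (-a) * Phi (-b) + Psi' a * Phi b) * p := by
    have := Psi'_nonneg a; have := Psi'_nonneg (-a); have := Phi_nonneg b
    have := Phi_nonneg (-b); positivity
  rw [linkDeriv]; linarith

lemma linkDeriv_nonpos {a b p q : ℝ} (hp : 0 ≤ p) (hq : 0 ≤ q) : linkDeriv a b p q ≤ 0 := by
  have := Psi_nonneg a; have := Psi_nonneg (-a); have := Phi'_nonneg b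
  have : 0 ≤ (Psi (-a) + Psi a) * Phi' b * q := by positivity
  linarith [linkDeriv_le q hp (a := a) (b := b)]

lemma linkDeriv_le_neg_one {a b p : ℝ} (ha : 1 ≤ |a|) (hb : |b| ≤ 1) (hp : 0 ≤ p) :
    linkDeriv a b p 1 ≤ -1 := by
  have h := mul_le_mul (one_le_Psi_neg_add_Psi ha) (one_le_Phi' hb) zero_le_one
    (by linarith [Psi_nonneg a, Psi_nonneg (-a)])
  linarith [linkDeriv_le 1 hp (a := a) (b := b)]

section Chain

variable {d : ℕ}

lemma coord_add_smul (y v : EuclideanSpace ℝ (Fin d)) (s : ℝ) (i : ℕ) :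
    coord d (y + s • v) i = coord d y i + s * coord d v i := by
  unfold coord; split <;> simp

lemma coord_smul (c : ℝ) (y : EuclideanSpace ℝ (Fin d)) (i : ℕ) :
    coord d (c • y) i = c * coord d y i := by
  unfold coord; split <;> simp

lemma hasDerivAt_coord_add_smul (y v : EuclideanSpace ℝ (Fin d)) (i : ℕ) :
    HasDerivAt (fun s : ℝ => coord d (y + s • v) i) (coord d v i) 0 := by
  simp only [coord_add_smul]
  simpa using ((hasDerivAt_id' 0).mul_const (coord d v i)).const_add (coord d y i)

lemma differentiable_coord (i : ℕ) :
    Differentiable ℝ fun y : EuclideanSpace ℝ (Fin d) => coord d y i := by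
  unfold coord; split
  · exact (EuclideanSpace.proj (𝕜 := ℝ) _ : EuclideanSpace ℝ (Fin d) →L[ℝ] ℝ).differentiable
  · exact differentiable_const 0

lemma Hchain_eq_link (y : EuclideanSpace ℝ (Fin d)) :
    Hchain d y = link 1 (coord d y 1) +
      ∑ i ∈ Finset.Icc 2 d, link (coord d y (i - 1)) (coord d y i) := by
  simp [Hchain, link, Psi_of_le (show (-1 : ℝ) ≤ 1 / 2 by norm_num)]

lemma differentiable_Hchain : Differentiable ℝ (Hchain d) := by
  have hPsi : Differentiable ℝ Psi := fun t => (hasDerivAt_Psi t).differentiableAt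
  have hPhi : Differentiable ℝ Phi := fun t => (hasDerivAt_Phi t).differentiableAt
  have hcoord := differentiable_coord (d := d)
  unfold Hchain
  fun_prop

noncomputable def hchainLineDeriv (d : ℕ) (y v : EuclideanSpace ℝ (Fin d)) : ℝ :=
  linkDeriv 1 (coord d y 1) 0 (coord d v 1) +
    ∑ i ∈ Finset.Icc 2 d,
      linkDeriv (coord d y (i - 1)) (coord d y i) (coord d v (i - 1)) (coord d v i)

lemma hasLineDerivAt_Hchain (y v : EuclideanSpace ℝ (Fin d)) :
    HasLineDerivAt ℝ (Hchain d) (hchainLineDeriv d y v) y v := by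
  have h := ((hasDerivAt_const (0 : ℝ) (1 : ℝ)).link (hasDerivAt_coord_add_smul y v 1)).fun_add
    (HasDerivAt.fun_sum (u := Finset.Icc 2 d) fun i _ =>
      (hasDerivAt_coord_add_smul y v (i - 1)).link (hasDerivAt_coord_add_smul y v i))
  simp only [zero_smul, add_zero] at h
  simpa only [HasLineDerivAt, Hchain_eq_link, hchainLineDeriv] using h

lemma prog_zero_smul {c : ℝ} (hc : c ≠ 0) (y : EuclideanSpace ℝ (Fin d)) :
    prog d 0 (c • y) = prog d 0 y := by
  simp [prog, coord_smul, hc]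

open Classical in
lemma prog_le_prog_of_le {a b : ℝ} (hab : a ≤ b) (y : EuclideanSpace ℝ (Fin d)) :
    prog d b y ≤ prog d a y :=
  Finset.sup_mono <| Finset.monotone_filter_right _ fun _ _ h => hab.trans_lt h

open Classical in
lemma abs_coord_le_of_prog_lt {a : ℝ} {y : EuclideanSpace ℝ (Fin d)} {k : ℕ}
    (hk1 : 1 ≤ k) (hkd : k ≤ d) (h : prog d a y < k) : |coord d y k| ≤ a := by
  by_contra! hlt
  have : k ≤ prog d a y :=
    Finset.le_sup (f := id) (Finset.mem_filter.mpr ⟨Finset.mem_Icc.mpr ⟨hk1, hkd⟩, hlt⟩)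
  omega

open Classical in
lemma lt_abs_coord_prog {a : ℝ} {y : EuclideanSpace ℝ (Fin d)} (h : prog d a y ≠ 0) :
    a < |coord d y (prog d a y)| := by
  have hne : ((Finset.Icc 1 d).filter fun i => a < |coord d y i|).Nonempty := by
    by_contra! hempty
    exact h (by simp [prog, hempty])
  obtain ⟨k, hk, hsup⟩ := Finset.exists_mem_eq_sup _ hne id
  rw [prog, hsup]
  exact (Finset.mem_filter.mp hk).2

lemma coord_single_nonneg (j : Fin d) (k : ℕ) :
    0 ≤ coord d (EuclideanSpace.single j (1 : ℝ)) k := by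
  unfold coord; split
  · rw [PiLp.single_apply]; split <;> norm_num
  · exact le_rfl

lemma coord_single_succ (j : Fin d) :
    coord d (EuclideanSpace.single j (1 : ℝ)) (j + 1) = 1 := by
  simp [coord]

lemma hchainLineDeriv_single_le_neg_one {y : EuclideanSpace ℝ (Fin d)} {k : ℕ}
    (hk : k < d) (hprog : prog d 1 y = k) :
    hchainLineDeriv d y (EuclideanSpace.single ⟨k, hk⟩ 1) ≤ -1 := by
  set e := EuclideanSpace.single (⟨k, hk⟩ : Fin d) (1 : ℝ)
  have he : ∀ i, 0 ≤ coord d e i := coord_single_nonneg _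
  have hek : coord d e (k + 1) = 1 := coord_single_succ _
  have hyk : |coord d y (k + 1)| ≤ 1 := abs_coord_le_of_prog_lt (by omega) hk (by omega)
  have hterm : ∀ i,
      linkDeriv (coord d y (i - 1)) (coord d y i) (coord d e (i - 1)) (coord d e i) ≤ 0 :=
    fun i => linkDeriv_nonpos (he _) (he _)
  unfold hchainLineDeriv
  -- The descent comes from the link into coordinate `k + 1`, whose source is the constant `1`
  -- if `k = 0` and `x_k` with `|x_k| > 1` otherwise.
  rcases Nat.eq_zero_or_pos k with rfl | hk0
  · have hfirst : linkDeriv 1 (coord d y 1) 0 (coord d e 1) ≤ -1 := by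
      rw [hek]; exact linkDeriv_le_neg_one (by norm_num) hyk le_rfl
    linarith [Finset.sum_nonpos fun i (_ : i ∈ Finset.Icc 2 d) => hterm i]
  · have hlast :
        linkDeriv (coord d y k) (coord d y (k + 1)) (coord d e k) (coord d e (k + 1)) ≤ -1 := by
      rw [hek]
      refine linkDeriv_le_neg_one ?_ hyk (he k)
      exact (hprog ▸ lt_abs_coord_prog (hprog ▸ hk0.ne')).le
    have hmem : k + 1 ∈ Finset.Icc 2 d := Finset.mem_Icc.mpr ⟨by omega, hk⟩
    rw [← Finset.add_sum_erase _ _ hmem, Nat.add_sub_cancel]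
    linarith [linkDeriv_nonpos le_rfl (he 1) (a := 1) (b := coord d y 1),
      Finset.sum_nonpos fun i (_ : i ∈ (Finset.Icc 2 d).erase (k + 1)) => hterm i]

lemma one_le_norm_fderiv_Hchain {y : EuclideanSpace ℝ (Fin d)} (hy : prog d 0 y < d) :
    1 ≤ ‖fderiv ℝ (Hchain d) y‖ := by
  have hk : prog d 1 y < d := (prog_le_prog_of_le zero_le_one y).trans_lt hy
  set e := EuclideanSpace.single (⟨_, hk⟩ : Fin d) (1 : ℝ)
  have h := (hasLineDerivAt_Hchain y e).abs_le_norm_fderiv_mul (differentiable_Hchain y)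
  rw [PiLp.norm_single, norm_one, mul_one] at h
  linarith [neg_le_abs (hchainLineDeriv d y e), hchainLineDeriv_single_le_neg_one hk rfl]

end Chain

theorem scaled_chain_gradient_lower_bound_general (d : ℕ)
    (L ε lam : ℝ) (hL : 0 < L) (hε : 0 < ε) (hlam : lam = 608 * ε / L)
    (f : EuclideanSpace ℝ (Fin d) → ℝ)
    (hf : ∀ x, f x = L * lam ^ 2 / 152 * Hchain d (lam⁻¹ • x)) :
    (∀ x, prog d 0 x < d → 4 * ε ≤ ‖gradient f x‖) ∧
      ∀ x, 4 * ε * (if prog d 0 x < d then (1 : ℝ) else 0) ≤ ‖gradient f x‖ := by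
  have hlam0 : 0 < lam := by rw [hlam]; positivity
  have hscale : |L * lam ^ 2 / 152| * |lam⁻¹| = 4 * ε := by
    rw [abs_of_pos (by positivity), abs_of_pos (by positivity), hlam]
    field_simp
    ring
  have hgrad : ∀ x, prog d 0 x < d → 4 * ε ≤ ‖gradient f x‖ := by
    intro x hx
    have hy : prog d 0 (lam⁻¹ • x) < d := by rwa [prog_zero_smul (inv_ne_zero hlam0.ne')]
    rw [norm_gradient_eq_norm_fderiv, funext hf,
      norm_fderiv_const_mul_comp_smul _ _ (differentiable_Hchain _), hscale]
    exact le_mul_of_one_le_right (by positivity) (one_le_norm_fderiv_Hchain hy)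
  refine ⟨hgrad, fun x => ?_⟩
  split_ifs with hx
  · simpa using hgrad x hx
  · simp

/-- For the scaled hard instance `f(x) = (Lλ²/152) H_d(x/λ)` with `λ = 608ε/L`,
every `x` with `prog_0(x) < d` satisfies `‖∇f(x)‖ ≥ 4ε`; equivalently,
`‖∇f(x)‖ ≥ 4ε·𝟙[prog_0(x) < d]` for all `x`. -/
theorem scaled_chain_gradient_lower_bound (d : ℕ) (hd : 1 ≤ d)
    (L ε lam : ℝ) (hL : 0 < L) (hε : 0 < ε) (hlam : lam = 608 * ε / L)
    (f : EuclideanSpace ℝ (Fin d) → ℝ)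
    (hf : ∀ x, f x = L * lam ^ 2 / 152 * Hchain d (lam⁻¹ • x)) :
    (∀ x, prog d 0 x < d → 4 * ε ≤ ‖gradient f x‖) ∧
      ∀ x, 4 * ε * (if prog d 0 x < d then (1 : ℝ) else 0) ≤ ‖gradient f x‖ :=
  scaled_chain_gradient_lower_bound_general d L ε lam hL hε hlam f hf
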